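/- arXiv:2403.10189 — 2 statements merged into one kernel-verified Lean document; each statement's English description precedes it below -/
import Mathlib

section
/- For all nonnegative integers r, s, n: H_1(r,s,n) − H_2(r,s,n) = H_1(r, s−1, n−2(r+s)+1) + H_1(r−1, s, n−4(r+s)+2), where terms with a negative argument are 0. -/
/-! A partition counted by `H₁(r,s,n)` but not by `H₂(r,s,n)` has an odd part `1` or an even
part `2(r+s)`. If it has a part `1`, deleting it and subtracting `2` from every other part gives a
partition counted by `H₁(r, s-1, n-2(r+s)+1)`; if it has no part `1`, deleting one part `2(r+s)`
and subtracting `2` from every other part gives one counted by `H₁(r-1, s, n-4(r+s)+2)`. Both maps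
are bijections, inverted by `q ↦ x ::ₘ q.map (· + 2)` for the deleted part `x`, and the degenerate
cases (negative arguments) are exactly those in which no partition of the corresponding kind
exists. -/

/-- Odd parts are pairwise distinct. -/
def distinctOddParts (m : Multiset ℕ) : Prop := ∀ a, Odd a → m.count a ≤ 1

/-- Every even part is at least `k` (vacuous if no even part). -/
def minEvenGe (m : Multiset ℕ) (k : ℕ) : Prop := ∀ a ∈ m, Even a → k ≤ a

/-- Every odd part is at least `k` (vacuous if no odd part). -/
def minOddGe (m : Multiset ℕ) (k : ℕ) : Prop := ∀ a ∈ m, Odd a → k ≤ a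

/-- No two parts are equal or consecutive, and no two even parts are equal or
consecutive even numbers: parts pairwise differ by at least 2, even parts by at least 4. -/
def gapCond (m : Multiset ℕ) : Prop :=
  (∀ a, m.count a ≤ 1) ∧ (∀ a ∈ m, ∀ b ∈ m, a < b → a + 2 ≤ b) ∧
  (∀ a ∈ m, ∀ b ∈ m, Even a → Even b → a < b → a + 4 ≤ b)

/-- Number of even parts. -/
def evenCount (m : Multiset ℕ) : ℕ := (m.filter (fun a => Even a)).card

/-- Number of odd parts. -/
def oddCount (m : Multiset ℕ) : ℕ := (m.filter (fun a => Odd a)).card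

/-- `H i r s n` for integer arguments, 0 when any argument is negative. -/
noncomputable def H (i : ℕ) (r s n : ℤ) : ℤ :=
  if 0 ≤ r ∧ 0 ≤ s ∧ 0 ≤ n then
    ({p : Nat.Partition n.toNat | evenCount p.parts = r.toNat ∧
        oddCount p.parts = s.toNat ∧ distinctOddParts p.parts ∧
        minEvenGe p.parts (2 * (r.toNat + s.toNat + i - 1)) ∧
        minOddGe p.parts (2 * i - 1)}.ncard : ℤ)
  else 0

lemma card_eq_evenCount_add_oddCount (m : Multiset ℕ) :
    Multiset.card m = evenCount m + oddCount m := by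
  simp only [evenCount, oddCount, ← Nat.not_even_iff_odd]
  rw [← Multiset.card_add, Multiset.filter_add_not]

lemma evenCount_cons (a : ℕ) (m : Multiset ℕ) :
    evenCount (a ::ₘ m) = evenCount m + if Even a then 1 else 0 := by
  by_cases h : Even a <;> simp [evenCount, h]

lemma oddCount_cons (a : ℕ) (m : Multiset ℕ) :
    oddCount (a ::ₘ m) = oddCount m + if Odd a then 1 else 0 := by
  by_cases h : Odd a <;> simp [oddCount, h]

lemma minEvenGe_cons (a : ℕ) (m : Multiset ℕ) (k : ℕ) :
    minEvenGe (a ::ₘ m) k ↔ (Even a → k ≤ a) ∧ minEvenGe m k := by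
  simp [minEvenGe]

lemma distinctOddParts_cons_of_even {a : ℕ} (m : Multiset ℕ) (ha : Even a) :
    distinctOddParts (a ::ₘ m) ↔ distinctOddParts m := by
  refine forall₂_congr fun b hb => ?_
  rw [Multiset.count_cons_of_ne (by rintro rfl; exact Nat.not_odd_iff_even.mpr ha hb)]

lemma distinctOddParts_cons_of_notMem {a : ℕ} {m : Multiset ℕ} (ha : a ∉ m) :
    distinctOddParts (a ::ₘ m) ↔ distinctOddParts m := by
  refine forall₂_congr fun b _ => ?_
  rw [Multiset.count_cons]
  split_ifs with h
  · simp [h, Multiset.count_eq_zero.mpr ha]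
  · rfl

lemma sum_map_add_two (m : Multiset ℕ) :
    (m.map (· + 2)).sum = m.sum + 2 * Multiset.card m := by
  simp [Multiset.sum_map_add, mul_comm]

lemma evenCount_map_add_two (m : Multiset ℕ) : evenCount (m.map (· + 2)) = evenCount m := by
  simp [evenCount, Multiset.filter_map, Nat.even_add]

lemma oddCount_map_add_two (m : Multiset ℕ) : oddCount (m.map (· + 2)) = oddCount m := by
  simp [oddCount, Multiset.filter_map, Nat.odd_add]

lemma distinctOddParts_iff_nodup (m : Multiset ℕ) :
    distinctOddParts m ↔ (m.filter Odd).Nodup := by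
  simp only [distinctOddParts, Multiset.nodup_iff_count_le_one, Multiset.count_filter]
  exact forall_congr' fun a => by split_ifs with h <;> simp [h]

lemma distinctOddParts_map_add_two (m : Multiset ℕ) :
    distinctOddParts (m.map (· + 2)) ↔ distinctOddParts m := by
  simp [distinctOddParts_iff_nodup, Multiset.filter_map, Nat.odd_add,
    Multiset.nodup_map_iff_of_injective (add_left_injective 2)]

lemma minEvenGe_map_add_two (m : Multiset ℕ) (k : ℕ) :
    minEvenGe (m.map (· + 2)) k ↔ minEvenGe m (k - 2) := by
  simp only [minEvenGe, Multiset.forall_mem_map_iff, Nat.even_add, even_two, iff_true]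
  exact forall₂_congr fun a _ => imp_congr_right fun _ => by omega

lemma minOddGe_one (m : Multiset ℕ) : minOddGe m 1 := fun _ _ ha => ha.pos

lemma pos_of_minEvenGe_two_mul_card {m : Multiset ℕ} (h : minEvenGe m (2 * Multiset.card m)) :
    ∀ a ∈ m, 0 < a := by
  intro a ha
  rcases Nat.even_or_odd a with he | ho
  · have := Multiset.card_pos_iff_exists_mem.mpr ⟨a, ha⟩
    have := h a ha he
    omega
  · exact ho.pos

lemma ncard_eq_of_cons_map_add_two {S T : Set (Multiset ℕ)} (x : ℕ)
    (hST : ∀ q, x ::ₘ q.map (· + 2) ∈ S ↔ q ∈ T)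
    (hS : ∀ m ∈ S, x ∈ m ∧ ∀ a ∈ m.erase x, 2 ≤ a) : S.ncard = T.ncard := by
  have hinj : Function.Injective fun q : Multiset ℕ => x ::ₘ q.map (· + 2) := fun q q' h =>
    Multiset.map_injective (add_left_injective 2) ((Multiset.cons_inj_right x).mp h)
  rw [← Set.ncard_image_of_injective T hinj]
  congr 1
  ext m
  refine ⟨fun hm => ?_, fun ⟨q, hq, hqm⟩ => hqm ▸ (hST q).mpr hq⟩
  obtain ⟨hx, h2⟩ := hS m hm
  have hm' : x ::ₘ ((m.erase x).map (· - 2)).map (· + 2) = m := by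
    nth_rw 2 [← Multiset.cons_erase hx]
    rw [Multiset.map_map]
    exact congrArg _ ((Multiset.map_congr rfl fun a ha => Nat.sub_add_cancel (h2 a ha)).trans
      (Multiset.map_id' _))
  exact ⟨_, (hST _).mp (hm'.symm ▸ hm), hm'⟩

/-- Partitions are handled through their multisets of parts, on which deleting a part and
shifting the others carries no proof obligations. -/
def hParts (i r s n : ℕ) : Set (Multiset ℕ) :=
  {m | (∀ a ∈ m, 0 < a) ∧ m.sum = n ∧ evenCount m = r ∧ oddCount m = s ∧
    distinctOddParts m ∧ minEvenGe m (2 * (r + s + i - 1)) ∧ minOddGe m (2 * i - 1)}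

lemma hParts_finite (i r s n : ℕ) : (hParts i r s n).Finite :=
  (Set.finite_range (Nat.Partition.parts (n := n))).subset
    fun m hm => ⟨⟨m, hm.1 _, hm.2.1⟩, rfl⟩

lemma H_eq_ncard (i : ℕ) (r s n : ℤ) :
    H i r s n = if 0 ≤ r ∧ 0 ≤ s ∧ 0 ≤ n then
      ((hParts i r.toNat s.toNat n.toNat).ncard : ℤ) else 0 := by
  rw [H, hParts, ← Set.ncard_image_of_injective _ fun _ _ => Nat.Partition.ext]
  congr 3
  ext m
  constructor
  · rintro ⟨p, hp, rfl⟩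
    exact ⟨fun _ => p.parts_pos, p.parts_sum, hp⟩
  · rintro ⟨hpos, hsum, hm⟩
    exact ⟨⟨m, hpos _, hsum⟩, hm, rfl⟩

lemma H_natCast (i r s n : ℕ) : H i r s n = (hParts i r s n).ncard := by
  simp [H_eq_ncard]

lemma mem_hParts_one_iff {r s n : ℕ} {m : Multiset ℕ} :
    m ∈ hParts 1 r s n ↔ m.sum = n ∧ evenCount m = r ∧ oddCount m = s ∧
      distinctOddParts m ∧ minEvenGe m (2 * (r + s)) := by
  simp only [hParts, Set.mem_ofPred_eq, Nat.add_sub_cancel, Nat.mul_one, Nat.reduceSub,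
    minOddGe_one, and_true]
  refine ⟨fun h => h.2, fun h => ⟨pos_of_minEvenGe_two_mul_card ?_, h⟩⟩
  rw [card_eq_evenCount_add_oddCount, h.2.1, h.2.2.1]
  exact h.2.2.2.2

lemma hParts_two_subset_one (r s n : ℕ) : hParts 2 r s n ⊆ hParts 1 r s n :=
  fun _ ⟨hpos, hsum, he, ho, hd, hmin, _⟩ =>
    ⟨hpos, hsum, he, ho, hd, fun a ha hae => by have := hmin a ha hae; omega, minOddGe_one _⟩

lemma hParts_one_diff_two (r s n : ℕ) :
    hParts 1 r s n \ hParts 2 r s n =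
      {m ∈ hParts 1 r s n | 1 ∈ m} ∪
        {m ∈ hParts 1 r s n | 1 ∉ m ∧ 2 * (r + s) ∈ m} := by
  ext m
  simp only [Set.mem_sdiff, Set.mem_union, Set.mem_sep_iff]
  constructor
  · rintro ⟨hm, hm2⟩
    by_cases h1 : 1 ∈ m
    · exact Or.inl ⟨hm, h1⟩
    refine Or.inr ⟨hm, h1, by_contra fun hN => hm2 ?_⟩
    obtain ⟨hpos, hsum, he, ho, hd, hmin, -⟩ := hm
    refine ⟨hpos, hsum, he, ho, hd, fun a ha hae => ?_, fun a ha hao => ?_⟩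
    · have := hmin a ha hae
      have : a ≠ 2 * (r + s) := by rintro rfl; exact hN ha
      obtain ⟨k, rfl⟩ := hae
      omega
    · have := hpos a ha
      have : a ≠ 1 := by rintro rfl; exact h1 ha
      obtain ⟨k, rfl⟩ := hao
      omega
  · rintro (⟨hm, h1⟩ | ⟨hm, -, h2⟩)
    · exact ⟨hm, fun ⟨_, _, _, _, _, _, hodd⟩ => absurd (hodd 1 h1 odd_one) (by norm_num)⟩
    · exact ⟨hm, fun ⟨_, _, _, _, _, heven, _⟩ =>
        absurd (heven _ h2 (even_two_mul _)) (by omega)⟩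

lemma cons_one_mem_hParts_one_iff (r s n : ℕ) (q : Multiset ℕ) :
    1 ::ₘ q.map (· + 2) ∈ hParts 1 r s n ↔
      1 ≤ s ∧ 2 * (r + s) ≤ n + 1 ∧ q ∈ hParts 1 r (s - 1) (n + 1 - 2 * (r + s)) := by
  have h1 : 1 ∉ q.map (· + 2) := by simp
  have hcard := card_eq_evenCount_add_oddCount q
  simp only [mem_hParts_one_iff, Multiset.sum_cons, sum_map_add_two, evenCount_cons,
    oddCount_cons, evenCount_map_add_two, oddCount_map_add_two,
    distinctOddParts_cons_of_notMem h1, distinctOddParts_map_add_two, minEvenGe_cons,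
    minEvenGe_map_add_two, odd_one,
    Nat.not_even_one, if_true, if_false]
  constructor
  · rintro ⟨hsum, he, ho, hd, -, hmin⟩
    refine ⟨by omega, by omega, by omega, by omega, by omega, hd, ?_⟩
    convert hmin using 2
    omega
  · rintro ⟨hs, hn, hsum, he, ho, hd, hmin⟩
    refine ⟨by omega, by omega, by omega, hd, nofun, ?_⟩
    convert hmin using 2
    omega

lemma cons_two_mul_mem_hParts_one_iff (r s n : ℕ) (q : Multiset ℕ) :
    2 * (r + s) ::ₘ q.map (· + 2) ∈ hParts 1 r s n ↔
      1 ≤ r ∧ 4 * (r + s) ≤ n + 2 ∧ q ∈ hParts 1 (r - 1) s (n + 2 - 4 * (r + s)) := by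
  have hev : Even (2 * (r + s)) := even_two_mul _
  have hcard := card_eq_evenCount_add_oddCount q
  simp only [mem_hParts_one_iff, Multiset.sum_cons, sum_map_add_two, evenCount_cons,
    oddCount_cons, evenCount_map_add_two, oddCount_map_add_two,
    distinctOddParts_cons_of_even _ hev, distinctOddParts_map_add_two, minEvenGe_cons,
    minEvenGe_map_add_two, hev, Nat.not_odd_iff_even.mpr hev, if_true, if_false]
  constructor
  · rintro ⟨hsum, he, ho, hd, -, hmin⟩
    refine ⟨by omega, by omega, by omega, by omega, by omega, hd, ?_⟩
    convert hmin using 2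
    omega
  · rintro ⟨hr, hn, hsum, he, ho, hd, hmin⟩
    refine ⟨by omega, by omega, by omega, hd, fun _ => le_rfl, ?_⟩
    convert hmin using 2
    omega

lemma ncard_sep_one_mem_eq_H (r s n : ℕ) :
    ({m ∈ hParts 1 r s n | 1 ∈ m}.ncard : ℤ) =
      H 1 r ((s : ℤ) - 1) ((n : ℤ) - 2 * ((r : ℤ) + s) + 1) := by
  rw [ncard_eq_of_cons_map_add_two 1
    (T := {q | 1 ≤ s ∧ 2 * (r + s) ≤ n + 1 ∧
      q ∈ hParts 1 r (s - 1) (n + 1 - 2 * (r + s))})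
    (fun q => by simp [cons_one_mem_hParts_one_iff]) ?_, H_eq_ncard]
  · by_cases h : 1 ≤ s ∧ 2 * (r + s) ≤ n + 1
    · rw [if_pos (by omega)]
      simp only [h, true_and, Set.ofPred_mem_eq]
      congr <;> omega
    · rw [if_neg (by omega)]
      simp [← and_assoc, h]
  · rintro m ⟨⟨hpos, -, -, -, hd, -⟩, h1⟩
    refine ⟨h1, fun a ha => ?_⟩
    have := hpos a (Multiset.mem_of_mem_erase ha)
    have : a ≠ 1 := by
      rintro rfl
      rw [← Multiset.count_pos, Multiset.count_erase_self] at ha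
      have := hd 1 odd_one
      omega
    omega

lemma ncard_sep_two_mul_mem_eq_H (r s n : ℕ) :
    ({m ∈ hParts 1 r s n | 1 ∉ m ∧ 2 * (r + s) ∈ m}.ncard : ℤ) =
      H 1 ((r : ℤ) - 1) s ((n : ℤ) - 4 * ((r : ℤ) + s) + 2) := by
  have h1 : 1 ≠ 2 * (r + s) := by omega
  rw [ncard_eq_of_cons_map_add_two (2 * (r + s))
    (T := {q | 1 ≤ r ∧ 4 * (r + s) ≤ n + 2 ∧
      q ∈ hParts 1 (r - 1) s (n + 2 - 4 * (r + s))})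
    (fun q => by simp [cons_two_mul_mem_hParts_one_iff, h1]) ?_, H_eq_ncard]
  · by_cases h : 1 ≤ r ∧ 4 * (r + s) ≤ n + 2
    · rw [if_pos (by omega)]
      simp only [h, true_and, Set.ofPred_mem_eq]
      congr <;> omega
    · rw [if_neg (by omega)]
      simp [← and_assoc, h]
  · rintro m ⟨⟨hpos, -⟩, h1m, h2m⟩
    refine ⟨h2m, fun a ha => ?_⟩
    have := hpos a (Multiset.mem_of_mem_erase ha)
    have : a ≠ 1 := by
      rintro rfl
      exact h1m (Multiset.mem_of_mem_erase ha)
    omega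

theorem H_recurrence (r s n : ℕ) :
    H 1 r s n - H 2 r s n =
      H 1 r ((s : ℤ) - 1) ((n : ℤ) - 2 * ((r : ℤ) + s) + 1) +
        H 1 ((r : ℤ) - 1) s ((n : ℤ) - 4 * ((r : ℤ) + s) + 2) := by
  have hsub := hParts_two_subset_one r s n
  have hfin := hParts_finite 1 r s n
  have hdisj : Disjoint {m ∈ hParts 1 r s n | 1 ∈ m}
      {m ∈ hParts 1 r s n | 1 ∉ m ∧ 2 * (r + s) ∈ m} :=
    Set.disjoint_left.mpr fun _ h1 h2 => h2.2.1 h1.2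
  rw [H_natCast, H_natCast, ← Nat.cast_sub (Set.ncard_le_ncard hsub hfin),
    ← Set.ncard_sdiff hsub (hfin.subset hsub), hParts_one_diff_two,
    Set.ncard_union_eq hdisj (hfin.subset (Set.sep_subset _ _))
      (hfin.subset (Set.sep_subset _ _)),
    Nat.cast_add, ncard_sep_one_mem_eq_H, ncard_sep_two_mul_mem_eq_H]
end

section
/- For all nonnegative integers r, s, n with 2(r+s) ≤ n: G_2(r,s,n) = G_1(r,s,n−2(r+s)). -/
noncomputable def Gcount (i r s n : ℕ) : ℕ :=
  {p : n.Partition | evenCount p.parts = r ∧ oddCount p.parts = s ∧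
    (∀ a ∈ p.parts, 2 * i - 1 ≤ a) ∧ gapCond p.parts}.ncard

lemma add2_inj : Function.Injective (fun a : ℕ => a + 2) := fun a b hab => by
  simp only at hab; omega

lemma count_card (m : Multiset ℕ) : evenCount m + oddCount m = Multiset.card m := by
  have heq : m.filter (fun a => Odd a) = m.filter (fun a => ¬ Even a) :=
    Multiset.filter_congr (fun a _ => Iff.symm Nat.not_even_iff_odd)
  unfold evenCount oddCount
  rw [heq, ← Multiset.card_add, Multiset.filter_add_not]

lemma evenCount_shift (m : Multiset ℕ) : evenCount (m.map (fun a => a + 2)) = evenCount m := by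
  unfold evenCount
  rw [Multiset.filter_map, Multiset.card_map]
  congr 1
  apply Multiset.filter_congr
  intro a _
  simp [Function.comp, Nat.even_add]

lemma oddCount_shift (m : Multiset ℕ) : oddCount (m.map (fun a => a + 2)) = oddCount m := by
  unfold oddCount
  rw [Multiset.filter_map, Multiset.card_map]
  congr 1
  apply Multiset.filter_congr
  intro a _
  simp [Function.comp, Nat.odd_add]

lemma even_shift {a : ℕ} : Even (a + 2) ↔ Even a := by simp [Nat.even_add]

lemma gapCond_shift (m : Multiset ℕ) : gapCond (m.map (fun a => a + 2)) ↔ gapCond m := by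
  unfold gapCond
  rw [← Multiset.nodup_iff_count_le_one, ← Multiset.nodup_iff_count_le_one,
    Multiset.nodup_map_iff_of_injective add2_inj]
  constructor
  · rintro ⟨h1, h2, h3⟩
    refine ⟨h1, ?_, ?_⟩
    · intro a ha b hb hab
      have := h2 (a + 2) (Multiset.mem_map_of_mem _ ha) (b + 2) (Multiset.mem_map_of_mem _ hb)
        (by omega)
      omega
    · intro a ha b hb hea heb hab
      have := h3 (a + 2) (Multiset.mem_map_of_mem _ ha) (b + 2) (Multiset.mem_map_of_mem _ hb)
        (even_shift.2 hea) (even_shift.2 heb) (by omega)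
      omega
  · rintro ⟨h1, h2, h3⟩
    refine ⟨h1, ?_, ?_⟩
    · intro a ha b hb hab
      obtain ⟨x, hx, rfl⟩ := Multiset.mem_map.1 ha
      obtain ⟨y, hy, rfl⟩ := Multiset.mem_map.1 hb
      have := h2 x hx y hy (by omega)
      omega
    · intro a ha b hb hea heb hab
      obtain ⟨x, hx, rfl⟩ := Multiset.mem_map.1 ha
      obtain ⟨y, hy, rfl⟩ := Multiset.mem_map.1 hb
      have := h3 x hx y hy (even_shift.1 hea) (even_shift.1 heb) (by omega)
      omega

lemma sum_shift (m : Multiset ℕ) :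
    (m.map (fun a => a + 2)).sum = m.sum + 2 * Multiset.card m := by
  induction m using Multiset.induction with
  | empty => simp
  | cons a m ih => simp [ih]; ring

/-- Representation: if all parts are at least 2, subtract-then-add-2 is the identity. -/
lemma repr_shift (m : Multiset ℕ) (hm : ∀ a ∈ m, 2 ≤ a) :
    (m.map (fun a => a - 2)).map (fun a => a + 2) = m := by
  rw [Multiset.map_map]
  have hcg : ∀ a ∈ m, ((fun a => a + 2) ∘ fun a => a - 2) a = id a := by
    intro a ha
    have := hm a ha
    simp only [Function.comp, id]
    omega
  rw [Multiset.map_congr rfl hcg, Multiset.map_id]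

lemma down_up (m : Multiset ℕ) : (m.map (fun a => a + 2)).map (fun a => a - 2) = m := by
  rw [Multiset.map_map]
  have hcg : ∀ a ∈ m, ((fun a => a - 2) ∘ fun a => a + 2) a = id a := by
    intro a _
    simp only [Function.comp, id]
    omega
  rw [Multiset.map_congr rfl hcg, Multiset.map_id]

def castPartition {a b : ℕ} (hab : a = b) (p : a.Partition) : b.Partition :=
  ⟨p.parts, p.parts_pos, hab ▸ p.parts_sum⟩

def upPartition (k c : ℕ) (q : k.Partition) (hcard : Multiset.card q.parts = c) :
    (k + 2 * c).Partition where
  parts := q.parts.map (fun a => a + 2)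
  parts_pos := by
    intro a ha
    obtain ⟨x, hx, rfl⟩ := Multiset.mem_map.1 ha
    omega
  parts_sum := by rw [sum_shift, q.parts_sum, hcard]

def downPartition (n c : ℕ) (p : n.Partition) (hmin : ∀ a ∈ p.parts, 3 ≤ a)
    (hcard : Multiset.card p.parts = c) : (n - 2 * c).Partition where
  parts := p.parts.map (fun a => a - 2)
  parts_pos := by
    intro a ha
    obtain ⟨x, hx, rfl⟩ := Multiset.mem_map.1 ha
    have h3 := hmin x hx
    omega
  parts_sum := by
    have hr := repr_shift p.parts (fun a ha => by have := hmin a ha; omega)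
    have hs := sum_shift (p.parts.map (fun a => a - 2))
    rw [hr, Multiset.card_map, hcard, p.parts_sum] at hs
    omega

theorem G2_eq_G1_shift (r s n : ℕ) (h : 2 * (r + s) ≤ n) :
    Gcount 2 r s n = Gcount 1 r s (n - 2 * (r + s)) := by
  unfold Gcount
  rw [← Nat.card_coe_set_eq, ← Nat.card_coe_set_eq]
  apply Nat.card_congr
  exact
    { toFun := fun x =>
        ⟨downPartition n (r + s) x.1 (fun a ha => x.2.2.2.1 a ha)
          (by rw [← count_card, x.2.1, x.2.2.1]),
         by
          obtain ⟨h1, h2, h3, h4⟩ := x.2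
          have hr := repr_shift x.1.parts (fun a ha => by have := h3 a ha; omega)
          have he := evenCount_shift (x.1.parts.map (fun a => a - 2))
          have ho := oddCount_shift (x.1.parts.map (fun a => a - 2))
          have hg := (gapCond_shift (x.1.parts.map (fun a => a - 2)))
          rw [hr] at he ho hg
          refine ⟨by rw [show (downPartition n (r + s) x.1 _ _).parts =
              x.1.parts.map (fun a => a - 2) from rfl]; omega, ?_, ?_, ?_⟩
          · show oddCount (x.1.parts.map (fun a => a - 2)) = s
            omega
          · show ∀ a ∈ x.1.parts.map (fun a => a - 2), 2 * 1 - 1 ≤ a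
            intro a ha
            obtain ⟨y, hy, rfl⟩ := Multiset.mem_map.1 ha
            have := h3 y hy
            omega
          · show gapCond (x.1.parts.map (fun a => a - 2))
            exact hg.1 (hr ▸ h4)⟩
      invFun := fun y =>
        ⟨castPartition (by omega)
          (upPartition (n - 2 * (r + s)) (r + s) y.1 (by rw [← count_card, y.2.1, y.2.2.1])),
         by
          obtain ⟨h1, h2, h3, h4⟩ := y.2
          refine ⟨?_, ?_, ?_, ?_⟩
          · show evenCount (y.1.parts.map (fun a => a + 2)) = r
            rw [evenCount_shift]; exact h1
          · show oddCount (y.1.parts.map (fun a => a + 2)) = s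
            rw [oddCount_shift]; exact h2
          · show ∀ a ∈ y.1.parts.map (fun a => a + 2), 2 * 2 - 1 ≤ a
            intro a ha
            obtain ⟨z, hz, rfl⟩ := Multiset.mem_map.1 ha
            have := y.1.parts_pos hz
            omega
          · show gapCond (y.1.parts.map (fun a => a + 2))
            exact (gapCond_shift _).2 h4⟩
      left_inv := by
        intro x
        apply Subtype.ext
        apply Nat.Partition.ext
        show (x.1.parts.map (fun a => a - 2)).map (fun a => a + 2) = x.1.parts
        exact repr_shift x.1.parts (fun a ha => by have := x.2.2.2.1 a ha; omega)
      right_inv := by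
        intro y
        apply Subtype.ext
        apply Nat.Partition.ext
        show (y.1.parts.map (fun a => a + 2)).map (fun a => a - 2) = y.1.parts
        exact down_up y.1.parts }
end
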